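/- Let G be a finite directed graph with vertex set V partitioned into regions by d : V → {1,…,p}, and suppose each flow variable f_{ij} is zero whenever d(i) ≠ d(j). If within a fixed region k (with root r) every non-root vertex has net inflow 1 (using only edges internal to the region, which is automatic since cross-region flows vanish), then every vertex of region k is connected to r within the subgraph induced by region k. -/

import Mathlib

/-!
Let `S` be the set of vertices of region `k` that are not connected to `r`. Positive flow into a
vertex of `S` can only come from region `k` (cross-region flows vanish) and from a vertex not
connected to `r` (otherwise the edge would connect its head to `r`), so no flow enters `S` from
outside. Summing net inflows over `S`, the flow on edges inside `S` cancels, leaving the flow across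
the cut: at most `0`. But `r ∉ S`, so each vertex of `S` has net inflow `1` and the sum is `#S`.
Hence `S` is empty.
-/

open Finset

section Flow

variable {V R : Type*} [Fintype V] [AddCommGroup R]

def netInflow (f : V → V → R) (v : V) : R := ∑ u, f u v - ∑ u, f v u

theorem sum_netInflow_eq_cut [DecidableEq V] (f : V → V → R) (S : Finset V) :
    ∑ v ∈ S, netInflow f v = ∑ v ∈ S, ∑ u ∈ Sᶜ, f u v - ∑ v ∈ S, ∑ u ∈ Sᶜ, f v u := by
  have internal_cancels : ∑ v ∈ S, ∑ u ∈ S, f u v = ∑ v ∈ S, ∑ u ∈ S, f v u := sum_comm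
  simp only [netInflow, sum_sub_distrib, ← sum_add_sum_compl S, sum_add_distrib, internal_cancels]
  abel

variable [PartialOrder R] [IsOrderedAddMonoid R]

theorem sum_netInflow_nonpos {f : V → V → R} {S : Finset V} (hnonneg : ∀ u v, 0 ≤ f u v)
    (hin : ∀ u ∉ S, ∀ v ∈ S, f u v = 0) : ∑ v ∈ S, netInflow f v ≤ 0 := by
  classical
  rw [sum_netInflow_eq_cut, sub_nonpos]
  calc ∑ v ∈ S, ∑ u ∈ Sᶜ, f u v
      = 0 := sum_eq_zero fun v hv => sum_eq_zero fun u hu => hin u (mem_compl.1 hu) v hv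
    _ ≤ ∑ v ∈ S, ∑ u ∈ Sᶜ, f v u := sum_nonneg fun v _ => sum_nonneg fun u _ => hnonneg v u

theorem eq_empty_of_netInflow_pos {f : V → V → R} {S : Finset V} (hnonneg : ∀ u v, 0 ≤ f u v)
    (hin : ∀ u ∉ S, ∀ v ∈ S, f u v = 0) (hpos : ∀ v ∈ S, 0 < netInflow f v) : S = ∅ := by
  by_contra hS
  exact (sum_pos hpos (nonempty_iff_ne_empty.2 hS)).not_ge (sum_netInflow_nonpos hnonneg hin)

end Flow

theorem SimpleGraph.reachable_fromRel_of_rel {V : Type*} {R : V → V → Prop} {u v : V}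
    (h : R u v) : (SimpleGraph.fromRel R).Reachable u v := by
  by_cases huv : u = v
  · exact huv ▸ Reachable.refl u
  · exact Adj.reachable ((fromRel_adj R u v).2 ⟨huv, .inl h⟩)

theorem region_flow_contiguity_general {V : Type*} [Fintype V] (p : ℕ)
    (d : V → Fin p) (k : Fin p) (r : V)
    (f : V → V → ℝ) (hnonneg : ∀ u v, 0 ≤ f u v)
    (hcross : ∀ u v, d u ≠ d v → f u v = 0)
    (hcons : ∀ v, d v = k → v ≠ r → (∑ u, f u v) - (∑ u, f v u) = 1) :
    ∀ v, d v = k →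
      (SimpleGraph.fromRel (fun u w => 0 < f u w ∧ d u = k ∧ d w = k)).Reachable v r := by
  classical
  set G := SimpleGraph.fromRel (fun u w => 0 < f u w ∧ d u = k ∧ d w = k)
  let S := univ.filter fun w => d w = k ∧ ¬G.Reachable w r
  have hin : ∀ u ∉ S, ∀ w ∈ S, f u w = 0 := by
    intro u hu w hw
    simp only [S, mem_filter, mem_univ, true_and, not_and_not_right] at hu hw
    by_cases hdu : d u = k
    · refine le_antisymm (not_lt.1 fun hpos => hw.2 ?_) (hnonneg u w)
      exact (SimpleGraph.reachable_fromRel_of_rel ⟨hpos, hdu, hw.1⟩).symm.trans (hu hdu)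
    · exact hcross u w (hw.1 ▸ hdu)
  have hpos : ∀ w ∈ S, 0 < netInflow f w := by
    intro w hw
    simp only [S, mem_filter, mem_univ, true_and] at hw
    rw [netInflow, hcons w hw.1 fun hwr => hw.2 (hwr ▸ SimpleGraph.Reachable.refl (G := G) w)]
    exact one_pos
  intro v hv
  by_contra hvr
  exact eq_empty_iff_forall_notMem.1 (eq_empty_of_netInflow_pos hnonneg hin hpos) v
    (by simp [S, hv, hvr])

/-- if cross-region flows vanish and every non-root vertex of
region k has net inflow 1, then every vertex of region k is connected to the
root within the subgraph induced by region k. -/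
theorem region_flow_contiguity {V : Type*} [Fintype V] (p : ℕ)
    (d : V → Fin p) (k : Fin p) (r : V) (hr : d r = k)
    (f : V → V → ℝ) (hnonneg : ∀ u v, 0 ≤ f u v)
    (hcross : ∀ u v, d u ≠ d v → f u v = 0)
    (hcons : ∀ v, d v = k → v ≠ r → (∑ u, f u v) - (∑ u, f v u) = 1) :
    ∀ v, d v = k →
      (SimpleGraph.fromRel (fun u w => 0 < f u w ∧ d u = k ∧ d w = k)).Reachable v r :=
  region_flow_contiguity_general p d k r f hnonneg hcross hcons
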